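/- For all n ≥ i > j ≥ 1 and λ_i − λ_j ≤ r < λ_i, one has (ad* e_{i−1,j;λ_i−r−1})(f) = −f_{j,i;r} if j = 1, and (ad* e_{i−1,j;λ_i−r−1})(f) = f_{j−1,i−1;λ_j−λ_i+r} − f_{j,i;r} if j > 1, where f_{a,b;t} is interpreted as 0 whenever t lies outside the range s_{a,b} ≤ t < λ_b. -/

import Mathlib

noncomputable section

attribute [local instance 100] LieRing.ofAssociativeRing

open scoped BigOperators

/-- The matrix of the nilpotent `e` determined by the filling `row, col` of the diagram:
`e = Σ e_{h,k}` over pairs of boxes in the same row with `col k = col h + 1`. -/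
def eNil (F : Type*) [Field F] {n N : ℕ} (row : Fin N → Fin n) (col : Fin N → ℕ) :
    Matrix (Fin N) (Fin N) F :=
  ∑ h : Fin N, ∑ k : Fin N,
    if row h = row k ∧ col k = col h + 1 then Matrix.single h k (1 : F) else 0

/-- The shift `s_{i,j} = λ_j - min(λ_i, λ_j)`. -/
def sft {n : ℕ} (lam : Fin n → ℕ) (i j : Fin n) : ℕ := lam j - min (lam i) (lam j)

/-- The element `e_{i,j;r}` of the centralizer, as a matrix:
`Σ e_{h,k}` over boxes `h` in row `i` and `k` in row `j` with `col k - col h = r`. -/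
def eE (F : Type*) [Field F] {n N : ℕ} (row : Fin N → Fin n) (col : Fin N → ℕ)
    (i j : Fin n) (r : ℕ) : Matrix (Fin N) (Fin N) F :=
  ∑ h : Fin N, ∑ k : Fin N,
    if row h = i ∧ row k = j ∧ col k = col h + r then Matrix.single h k (1 : F) else 0

/-- The centralizer `g_e` of `e` in `gl_N(F)`, as a Lie subalgebra. -/
def gCent (F : Type*) [Field F] {N : ℕ} (e : Matrix (Fin N) (Fin N) F) :
    LieSubalgebra F (Matrix (Fin N) (Fin N) F) where
  carrier := {x | x * e = e * x}
  add_mem' := by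
    intro x y hx hy
    simp only [Set.mem_setOf_eq] at *
    rw [add_mul, mul_add, hx, hy]
  zero_mem' := by simp
  smul_mem' := by
    intro c x hx
    simp only [Set.mem_setOf_eq] at *
    rw [Matrix.smul_mul, Matrix.mul_smul, hx]
  lie_mem' := by
    intro x y hx hy
    simp only [Set.mem_setOf_eq, Ring.lie_def] at *
    rw [sub_mul, mul_sub, mul_assoc, hy, ← mul_assoc, hx, mul_assoc, mul_assoc, hx,
      ← mul_assoc, ← mul_assoc, hy, mul_assoc, mul_assoc]

/-- The sum of the `t` largest parts of `λ` (recall `λ_1 ≤ ⋯ ≤ λ_n`, zero-indexed). -/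
def topSum {n : ℕ} (lam : Fin n → ℕ) (t : ℕ) : ℕ :=
  ∑ i ∈ Finset.univ.filter (fun i : Fin n => n - t ≤ (i : ℕ)), lam i

/-- The invariant degree `d_r`: the least `d` with `λ_n + ⋯ + λ_{n-d+1} ≥ r`. -/
def invDeg {n : ℕ} (lam : Fin n → ℕ) (r : ℕ) : ℕ :=
  sInf {d : ℕ | r ≤ topSum lam d}

/-- The index set for the basis `{e_{i,j;r}}` of `g_e`: triples `(i,j,r)` with
`s_{i,j} ≤ r < λ_j`. -/
def BoxIdx {n : ℕ} (lam : Fin n → ℕ) : Type :=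
  {t : Fin n × Fin n × ℕ // sft lam t.1 t.2.1 ≤ t.2.2 ∧ t.2.2 < lam t.2.1}

/-- The column determinant of a matrix with (possibly noncommutative) ring entries:
`cdet A = Σ_w sgn(w) a_{w1,1} ⋯ a_{wn,n}`. -/
def cdet {R : Type*} [Ring R] {m : ℕ} (A : Matrix (Fin m) (Fin m) R) : R :=
  ∑ w : Equiv.Perm (Fin m), ((Equiv.Perm.sign w : ℤˣ) : ℤ) • (List.ofFn fun q => A (w q) q).prod

section UEA

variable (F : Type*) [Field F] {n N : ℕ} (lam : Fin n → ℕ)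
  (row : Fin N → Fin n) (col : Fin N → ℕ)
  (eB : Fin n → Fin n → ℕ → ↥(gCent F (eNil F row col)))

/-- `ẽ_{i,j;r} = e_{i,j;r} - δ_{r,0} δ_{i,j} (i-1) λ_i` inside `U(g_e)`
(zero-indexed: the scalar is `i·λ_i` for `i : Fin n`). -/
def eTilde (i j : Fin n) (r : ℕ) :
    UniversalEnvelopingAlgebra F ↥(gCent F (eNil F row col)) :=
  UniversalEnvelopingAlgebra.ι F (eB i j r) -
    (if r = 0 ∧ i = j then (((i : ℕ) * lam i : ℕ) : F) • 1 else 0)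

/-- The column determinant `cdet(μ)` in `U(g_e)` attached to `μ ⊆ λ`. -/
def cdetMu (μ : Fin n → Fin (N + 1)) :
    UniversalEnvelopingAlgebra F ↥(gCent F (eNil F row col)) :=
  ∑ w : Equiv.Perm (Fin (Finset.univ.filter (fun i : Fin n => (μ i : ℕ) ≠ 0)).card),
    ((Equiv.Perm.sign w : ℤˣ) : ℤ) •
      (List.ofFn fun j =>
        eTilde F lam row col eB
          (((Finset.univ.filter (fun i : Fin n => (μ i : ℕ) ≠ 0)).orderIsoOfFin rfl (w j)) : Fin n)
          (((Finset.univ.filter (fun i : Fin n => (μ i : ℕ) ≠ 0)).orderIsoOfFin rfl j) : Fin n)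
          ((μ (((Finset.univ.filter (fun i : Fin n => (μ i : ℕ) ≠ 0)).orderIsoOfFin rfl j) : Fin n) : ℕ) - 1)).prod

/-- The element `z_r = Σ_{μ ⊆ λ, |μ| = r, ℓ(μ) = d_r} cdet(μ)` of `U(g_e)`. -/
def zEl (r : ℕ) : UniversalEnvelopingAlgebra F ↥(gCent F (eNil F row col)) :=
  ∑ μ ∈ Finset.univ.filter (fun μ : Fin n → Fin (N + 1) =>
      (∀ i, (μ i : ℕ) ≤ lam i) ∧ (∑ i, (μ i : ℕ)) = r ∧
        (Finset.univ.filter (fun i : Fin n => (μ i : ℕ) ≠ 0)).card = invDeg lam r),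
    cdetMu F lam row col eB μ

end UEA

section Sym

variable (F : Type*) [Field F] {n : ℕ} (lam : Fin n → ℕ)

/-- The generator `e_{i,j;r}` of the symmetric algebra `S(g_e)`, modelled as the variable
`X (i,j,r)` of a polynomial ring (and `0` for indices out of range, which never occur). -/
def xE (i j : Fin n) (r : ℕ) : MvPolynomial (BoxIdx lam) F :=
  if h : sft lam i j ≤ r ∧ r < lam j then MvPolynomial.X ⟨(i, j, r), h⟩ else 0

/-- The summand of `x_r` attached to `μ ⊆ λ`:
`Σ_w sgn(w) e_{i_{w1},i_1;μ_{i_1}-1} ⋯ e_{i_{wd},i_d;μ_{i_d}-1}` in `S(g_e)`. -/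
def xcdetMu (N : ℕ) (μ : Fin n → Fin (N + 1)) : MvPolynomial (BoxIdx lam) F :=
  ∑ w : Equiv.Perm (Fin (Finset.univ.filter (fun i : Fin n => (μ i : ℕ) ≠ 0)).card),
    ((Equiv.Perm.sign w : ℤˣ) : ℤ) •
      ∏ j, xE F lam
          (((Finset.univ.filter (fun i : Fin n => (μ i : ℕ) ≠ 0)).orderIsoOfFin rfl (w j)) : Fin n)
          (((Finset.univ.filter (fun i : Fin n => (μ i : ℕ) ≠ 0)).orderIsoOfFin rfl j) : Fin n)
          ((μ (((Finset.univ.filter (fun i : Fin n => (μ i : ℕ) ≠ 0)).orderIsoOfFin rfl j) : Fin n) : ℕ) - 1)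

/-- The invariant `x_r ∈ S(g_e)`. -/
def xEl (N : ℕ) (r : ℕ) : MvPolynomial (BoxIdx lam) F :=
  ∑ μ ∈ Finset.univ.filter (fun μ : Fin n → Fin (N + 1) =>
      (∀ i, (μ i : ℕ) ≤ lam i) ∧ (∑ i, (μ i : ℕ)) = r ∧
        (Finset.univ.filter (fun i : Fin n => (μ i : ℕ) ≠ 0)).card = invDeg lam r),
    xcdetMu F lam N μ

end Sym

section Dual

variable (F : Type*) [Field F] {n N : ℕ} (lam : Fin n → ℕ)
  (row : Fin N → Fin n) (col : Fin N → ℕ)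
  (bE : Module.Basis (BoxIdx lam) F ↥(gCent F (eNil F row col)))

/-- The coadjoint action `(ad* x)(ξ) = -ξ ∘ (ad x)` of `g_e` on `g_e^*`. -/
def coad (x : ↥(gCent F (eNil F row col)))
    (ξ : Module.Dual F ↥(gCent F (eNil F row col))) :
    Module.Dual F ↥(gCent F (eNil F row col)) :=
  -(ξ ∘ₗ (LieAlgebra.ad F ↥(gCent F (eNil F row col)) x : _ →ₗ[F] _))

/-- The dual basis vector `f_{i,j;t}` of `g_e^*`, with the convention that it is `0`
for `t` outside the range `s_{i,j} ≤ t < λ_j`. -/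
def fHat (i j : Fin n) (t : ℤ) : Module.Dual F ↥(gCent F (eNil F row col)) :=
  if h : (sft lam i j : ℤ) ≤ t ∧ t < (lam j : ℤ) then
    bE.coord ⟨(i, j, t.toNat), ⟨show sft lam i j ≤ t.toNat by omega, show t.toNat < lam j by omega⟩⟩ else 0

/-- The basis vector `e_{i,j;r}` of `g_e`, with the convention that it is `0` for `r`
outside the range `s_{i,j} ≤ r < λ_j`. -/
def eHat (i j : Fin n) (r : ℕ) : ↥(gCent F (eNil F row col)) :=
  if h : sft lam i j ≤ r ∧ r < lam j then bE ⟨(i, j, r), h⟩ else 0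

/-- The functional `f = f_{1,2;λ_2-1} + f_{2,3;λ_3-1} + ⋯ + f_{n-1,n;λ_n-1} ∈ g_e^*`,
described by its values on the basis `{e_{i,j;r}}`. -/
def fReg : Module.Dual F ↥(gCent F (eNil F row col)) :=
  bE.constr F fun b : BoxIdx lam =>
    if (b.1.2.1 : ℕ) = (b.1.1 : ℕ) + 1 ∧ b.1.2.2 = lam b.1.2.1 - 1 then (1 : F) else 0

/-- The point `f + Σ_{j,t} a_{j,t} f_{n,j;t}` of the slice `S = f + V`, described by its
values on the basis `{e_{i,j;r}}`; here `a j t` is the coordinate `a_{j+1,t}` (rows of the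
diagram being zero-indexed). -/
def slicePt (a : ℕ → ℕ → F) : Module.Dual F ↥(gCent F (eNil F row col)) :=
  bE.constr F fun b : BoxIdx lam =>
    (if (b.1.2.1 : ℕ) = (b.1.1 : ℕ) + 1 ∧ b.1.2.2 = lam b.1.2.1 - 1 then (1 : F) else 0) +
      (if (b.1.1 : ℕ) = n - 1 then a (b.1.2.1 : ℕ) b.1.2.2 else 0)

/-- The subspace `V ⊆ g_e^*` spanned by the `f_{n,j;t}`, `0 ≤ t < λ_j`. -/
def sliceV : Submodule F (Module.Dual F ↥(gCent F (eNil F row col))) :=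
  Submodule.span F {φ | ∃ b : BoxIdx lam, (b.1.1 : ℕ) = n - 1 ∧ φ = bE.coord b}

/-- Restriction of polynomial functions on `g_e^*` to the slice `S = f + V`, as an
algebra homomorphism onto the coordinate ring of `S ≅ 𝔸^N` (with coordinates `a_{j,t}`,
`0 ≤ t < λ_j`, indexed by `Σ_j Fin (λ_j)`). -/
def restrictS : MvPolynomial (BoxIdx lam) F →ₐ[F] MvPolynomial ((j : Fin n) × Fin (lam j)) F :=
  MvPolynomial.aeval fun b : BoxIdx lam =>
    MvPolynomial.C
        (if (b.1.2.1 : ℕ) = (b.1.1 : ℕ) + 1 ∧ b.1.2.2 = lam b.1.2.1 - 1 then (1 : F) else 0) +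
      (if (b.1.1 : ℕ) = n - 1 then MvPolynomial.X ⟨b.1.2.1, ⟨b.1.2.2, b.2.2⟩⟩ else 0)

end Dual

/-! In `g_e` the basis multiplies like matrix units, `e_{I,J;R} e_{J,q;s} = e_{I,q;R+s}` (which
vanishes once `R + s ≥ λ_q`), so `⁅e_{I,J;R}, e_{p,q;s}⁆` has at most two terms. As `f` only sees the
elements `e_{a,a+1;λ_{a+1}-1}`, evaluating `-f ∘ ad e_{I,J;R}` on the basis gives
`(ad* e_{I,J;R}) f = f_{J-1,I;λ_J-1-R} - f_{J,I+1;λ_{I+1}-1-R}`; the theorem is the case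
`I = i-1`, `J = j`, `R = λ_i-r-1`. -/

section Centralizer

variable {F : Type*} [Field F] {n N : ℕ} {lam : Fin n → ℕ} {row : Fin N → Fin n}
  {col : Fin N → ℕ}

lemma eq_of_row_eq_of_col_eq
    (horder : ∀ k l : Fin N, k < l ↔ (row k < row l ∨ (row k = row l ∧ col k < col l)))
    {h k : Fin N} (hrow : row h = row k) (hcol : col h = col k) : h = k := by
  by_contra hne
  rcases lt_or_gt_of_ne hne with hlt | hlt
  · rcases (horder _ _).1 hlt with h' | ⟨_, h'⟩ <;> simp_all
  · rcases (horder _ _).1 hlt with h' | ⟨_, h'⟩ <;> simp_all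

lemma eE_apply (i j : Fin n) (r : ℕ) (a b : Fin N) :
    eE F row col i j r a b = if row a = i ∧ row b = j ∧ col b = col a + r then 1 else 0 := by
  classical
  simp only [eE, Matrix.sum_apply, apply_ite (fun M : Matrix (Fin N) (Fin N) F => M a b),
    Matrix.single_apply, Matrix.zero_apply]
  rw [Finset.sum_eq_single a (fun h _ hh => by simp [hh]) (by simp),
    Finset.sum_eq_single b (fun k _ hk => by simp [hk]) (by simp)]
  simp

lemma eE_mul_eE_of_ne {i j j' l : Fin n} (R s : ℕ) (hjj : j ≠ j') :
    eE F row col i j R * eE F row col j' l s = 0 := by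
  ext a b
  simp only [Matrix.mul_apply, Matrix.zero_apply, eE_apply]
  refine Finset.sum_eq_zero fun k _ => ?_
  split_ifs with h1 h2 <;> simp_all

lemma eE_mul_eE
    (hcol : ∀ k, 1 ≤ col k ∧ col k ≤ lam (row k))
    (horder : ∀ k l : Fin N, k < l ↔ (row k < row l ∨ (row k = row l ∧ col k < col l)))
    (hsurj : ∀ (i : Fin n) (c : ℕ), 1 ≤ c → c ≤ lam i → ∃ k, row k = i ∧ col k = c)
    (i j l : Fin n) (R s : ℕ) (hs : lam l ≤ lam j + s) :
    eE F row col i j R * eE F row col j l s = eE F row col i l (R + s) := by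
  ext a b
  simp only [Matrix.mul_apply, eE_apply]
  by_cases hab : row a = i ∧ row b = l ∧ col b = col a + (R + s)
  · -- the product is nonzero through the unique box of row `j` in column `col a + R`
    obtain ⟨k, hkrow, hkcol⟩ := hsurj j (col a + R) (by have := (hcol a).1; omega)
      (by have := (hcol b).2; rw [hab.2.1] at this; omega)
    rw [if_pos hab, Finset.sum_eq_single k]
    · rw [if_pos ⟨hab.1, hkrow, hkcol⟩, if_pos ⟨hkrow, hab.2.1, by omega⟩, mul_one]
    · intro m _ hm
      rw [ite_mul, zero_mul, ite_eq_right_iff]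
      exact fun h => absurd (eq_of_row_eq_of_col_eq horder (h.2.1.trans hkrow.symm)
        (h.2.2.trans hkcol.symm)) hm
    · simp
  · rw [if_neg hab]
    refine Finset.sum_eq_zero fun k _ => ?_
    split_ifs with h1 h2
    · exact absurd ⟨h1.1, h2.2.1, by omega⟩ hab
    all_goals simp

lemma eE_eq_zero_of_le (hcol : ∀ k, 1 ≤ col k ∧ col k ≤ lam (row k))
    (p q : Fin n) {t : ℕ} (ht : lam q ≤ t) : eE F row col p q t = 0 := by
  ext a b
  rw [eE_apply, Matrix.zero_apply, if_neg]
  rintro ⟨-, hb, hab⟩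
  have := (hcol a).1
  have := (hcol b).2
  rw [hb] at this
  omega

lemma sft_le_sft_add_sft (lam : Fin n → ℕ) (i j l : Fin n) :
    sft lam i l ≤ sft lam i j + sft lam j l := by
  simp only [sft]
  omega

lemma coe_eHat (hcol : ∀ k, 1 ≤ col k ∧ col k ≤ lam (row k))
    (bE : Module.Basis (BoxIdx lam) F ↥(gCent F (eNil F row col)))
    (hbE : ∀ b : BoxIdx lam,
      (↑(bE b) : Matrix (Fin N) (Fin N) F) = eE F row col b.1.1 b.1.2.1 b.1.2.2)
    (p q : Fin n) {t : ℕ} (ht : sft lam p q ≤ t) :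
    (eHat F lam row col bE p q t : Matrix (Fin N) (Fin N) F) = eE F row col p q t := by
  unfold eHat
  split_ifs with h
  · exact hbE _
  · rw [eE_eq_zero_of_le hcol p q (by omega)]
    rfl

lemma coe_basis_mul_coe_basis
    (hcol : ∀ k, 1 ≤ col k ∧ col k ≤ lam (row k))
    (horder : ∀ k l : Fin N, k < l ↔ (row k < row l ∨ (row k = row l ∧ col k < col l)))
    (hsurj : ∀ (i : Fin n) (c : ℕ), 1 ≤ c → c ≤ lam i → ∃ k, row k = i ∧ col k = c)
    (bE : Module.Basis (BoxIdx lam) F ↥(gCent F (eNil F row col)))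
    (hbE : ∀ b : BoxIdx lam,
      (↑(bE b) : Matrix (Fin N) (Fin N) F) = eE F row col b.1.1 b.1.2.1 b.1.2.2)
    {I J p q : Fin n} {R s : ℕ}
    (h1 : sft lam I J ≤ R ∧ R < lam J) (h2 : sft lam p q ≤ s ∧ s < lam q) :
    (bE ⟨(I, J, R), h1⟩ : Matrix (Fin N) (Fin N) F) * bE ⟨(p, q, s), h2⟩ =
      ↑(if J = p then eHat F lam row col bE I q (R + s) else 0) := by
  rw [hbE ⟨(I, J, R), h1⟩, hbE ⟨(p, q, s), h2⟩]
  split_ifs with hJp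
  · subst hJp
    have := sft_le_sft_add_sft lam I J q
    rw [eE_mul_eE hcol horder hsurj I J q R s (by have := h2.1; simp only [sft] at this; omega),
      coe_eHat hcol bE hbE I q (by omega)]
  · exact eE_mul_eE_of_ne R s hJp

lemma lie_basis_basis
    (hcol : ∀ k, 1 ≤ col k ∧ col k ≤ lam (row k))
    (horder : ∀ k l : Fin N, k < l ↔ (row k < row l ∨ (row k = row l ∧ col k < col l)))
    (hsurj : ∀ (i : Fin n) (c : ℕ), 1 ≤ c → c ≤ lam i → ∃ k, row k = i ∧ col k = c)
    (bE : Module.Basis (BoxIdx lam) F ↥(gCent F (eNil F row col)))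
    (hbE : ∀ b : BoxIdx lam,
      (↑(bE b) : Matrix (Fin N) (Fin N) F) = eE F row col b.1.1 b.1.2.1 b.1.2.2)
    {I J p q : Fin n} {R s : ℕ}
    (h1 : sft lam I J ≤ R ∧ R < lam J) (h2 : sft lam p q ≤ s ∧ s < lam q) :
    ⁅bE ⟨(I, J, R), h1⟩, bE ⟨(p, q, s), h2⟩⁆ =
      (if J = p then eHat F lam row col bE I q (R + s) else 0) -
        (if q = I then eHat F lam row col bE p J (R + s) else 0) := by
  apply Subtype.ext
  rw [LieSubalgebra.coe_bracket, Ring.lie_def, coe_basis_mul_coe_basis hcol horder hsurj bE hbE,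
    coe_basis_mul_coe_basis hcol horder hsurj bE hbE, Nat.add_comm s R]
  rfl

lemma fReg_basis (bE : Module.Basis (BoxIdx lam) F ↥(gCent F (eNil F row col)))
    {p q : Fin n} {t : ℕ} (ht : sft lam p q ≤ t ∧ t < lam q) :
    fReg F lam row col bE (bE ⟨(p, q, t), ht⟩) =
      if (q : ℕ) = p + 1 ∧ t = lam q - 1 then 1 else 0 :=
  bE.constr_basis F _ _

lemma fReg_eHat (bE : Module.Basis (BoxIdx lam) F ↥(gCent F (eNil F row col)))
    (p q : Fin n) (t : ℕ) :
    fReg F lam row col bE (eHat F lam row col bE p q t) =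
      if (q : ℕ) = p + 1 ∧ t + 1 = lam q ∧ 0 < lam p then 1 else 0 := by
  unfold eHat
  by_cases ht : sft lam p q ≤ t ∧ t < lam q
  · rw [dif_pos ht, fReg_basis]
    simp only [sft] at ht
    refine if_congr ?_ rfl rfl
    omega
  · rw [dif_neg ht, map_zero, if_neg]
    simp only [sft] at ht
    omega

lemma fHat_basis (bE : Module.Basis (BoxIdx lam) F ↥(gCent F (eNil F row col)))
    (a b : Fin n) (t : ℤ) {p q : Fin n} {s : ℕ} (hs : sft lam p q ≤ s ∧ s < lam q) :
    fHat F lam row col bE a b t (bE ⟨(p, q, s), hs⟩) =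
      if p = a ∧ q = b ∧ (s : ℤ) = t then 1 else 0 := by
  classical
  unfold fHat
  by_cases ht : (sft lam a b : ℤ) ≤ t ∧ t < lam b
  · rw [dif_pos ht]
    refine (bE.repr_self_apply _ _).trans (if_congr ?_ rfl rfl)
    constructor
    · intro h
      obtain ⟨rfl, rfl, hst⟩ := Prod.ext_iff.1 (congrArg (fun x : BoxIdx lam => x.1) h)
      exact ⟨rfl, rfl, by omega⟩
    · rintro ⟨rfl, rfl, rfl⟩
      rfl
  · rw [dif_neg ht, if_neg ?_]
    · rfl
    rintro ⟨rfl, rfl, rfl⟩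
    exact ht ⟨by exact_mod_cast hs.1, by exact_mod_cast hs.2⟩

lemma coad_basis_fReg
    (hcol : ∀ k, 1 ≤ col k ∧ col k ≤ lam (row k))
    (horder : ∀ k l : Fin N, k < l ↔ (row k < row l ∨ (row k = row l ∧ col k < col l)))
    (hsurj : ∀ (i : Fin n) (c : ℕ), 1 ≤ c → c ≤ lam i → ∃ k, row k = i ∧ col k = c)
    (bE : Module.Basis (BoxIdx lam) F ↥(gCent F (eNil F row col)))
    (hbE : ∀ b : BoxIdx lam,
      (↑(bE b) : Matrix (Fin N) (Fin N) F) = eE F row col b.1.1 b.1.2.1 b.1.2.2)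
    {I J : Fin n} {R : ℕ} (h : sft lam I J ≤ R ∧ R < lam J) :
    coad F row col (bE ⟨(I, J, R), h⟩) (fReg F lam row col bE) =
      (if hJ : 0 < (J : ℕ) then
          fHat F lam row col bE ⟨J - 1, by omega⟩ I ((lam J : ℤ) - 1 - R) else 0) -
        (if hI : (I : ℕ) + 1 < n then
          fHat F lam row col bE J ⟨I + 1, hI⟩ ((lam ⟨I + 1, hI⟩ : ℤ) - 1 - R) else 0) := by
  refine bE.ext fun ⟨⟨p, q, s⟩, hs⟩ => ?_
  have hR := h
  simp only [sft] at hR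
  rw [coad, LinearMap.neg_apply, LinearMap.comp_apply, LieAlgebra.ad_apply,
    lie_basis_basis hcol horder hsurj bE hbE, map_sub, apply_ite (fReg F lam row col bE),
    apply_ite (fReg F lam row col bE), fReg_eHat, fReg_eHat, map_zero, neg_sub,
    LinearMap.sub_apply]
  congr 1
  · by_cases hJ : 0 < (J : ℕ)
    · rw [dif_pos hJ, fHat_basis, ← ite_and]
      refine if_congr ⟨?_, ?_⟩ rfl rfl
      · rintro ⟨rfl, hJp, hRs, -⟩
        exact ⟨Fin.ext (by simp only; omega), rfl, by omega⟩
      · rintro ⟨rfl, rfl, hst⟩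
        simp only [sft] at hs
        exact ⟨rfl, by simp only; omega, by omega, by omega⟩
    · rw [dif_neg hJ, ← ite_and, if_neg ?_]
      · rfl
      rintro ⟨-, hJp, -⟩
      omega
  · by_cases hI : (I : ℕ) + 1 < n
    · rw [dif_pos hI, fHat_basis, ← ite_and]
      refine if_congr ⟨?_, ?_⟩ rfl rfl
      · rintro ⟨rfl, hqI, hRs, -⟩
        obtain rfl : q = ⟨I + 1, hI⟩ := Fin.ext hqI
        exact ⟨rfl, rfl, by omega⟩
      · rintro ⟨rfl, rfl, hst⟩
        exact ⟨rfl, rfl, by omega, by omega⟩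
    · rw [dif_neg hI, ← ite_and, if_neg ?_]
      · rfl
      rintro ⟨-, hqI, -⟩
      omega

end Centralizer

theorem statement16
    {F : Type*} [Field F] {n N : ℕ} (lam : Fin n → ℕ)
    (hmono : Monotone lam)
    (row : Fin N → Fin n) (col : Fin N → ℕ)
    (hcol : ∀ k, 1 ≤ col k ∧ col k ≤ lam (row k))
    (horder : ∀ k l : Fin N, k < l ↔ (row k < row l ∨ (row k = row l ∧ col k < col l)))
    (hsurj : ∀ (i : Fin n) (c : ℕ), 1 ≤ c → c ≤ lam i → ∃ k, row k = i ∧ col k = c)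
    (bE : Module.Basis (BoxIdx lam) F ↥(gCent F (eNil F row col)))
    (hbE : ∀ b : BoxIdx lam,
      (↑(bE b) : Matrix (Fin N) (Fin N) F) = eE F row col b.1.1 b.1.2.1 b.1.2.2)
    (i j : Fin n) (hji : (j : ℕ) < (i : ℕ)) (r : ℕ)
    (hr1 : lam i - lam j ≤ r) (hr2 : r < lam i) :
    coad F row col
        (eHat F lam row col bE ⟨(i : ℕ) - 1, by have := i.isLt; omega⟩ j (lam i - r - 1))
        (fReg F lam row col bE) =
      if (j : ℕ) = 0 then -fHat F lam row col bE j i (r : ℤ)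
      else
        fHat F lam row col bE ⟨(j : ℕ) - 1, by have := j.isLt; omega⟩
            ⟨(i : ℕ) - 1, by have := i.isLt; omega⟩
            ((lam j : ℤ) - (lam i : ℤ) + (r : ℤ)) -
          fHat F lam row col bE j i (r : ℤ) := by
  have hjI : lam j ≤ lam ⟨(i : ℕ) - 1, by omega⟩ := hmono (Fin.mk_le_mk.2 (by omega))
  have hrange : sft lam ⟨(i : ℕ) - 1, by omega⟩ j ≤ lam i - r - 1 ∧ lam i - r - 1 < lam j := by
    simp only [sft]
    omega
  have hI : (i : ℕ) - 1 + 1 < n := by omega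
  have hIi : (⟨(i : ℕ) - 1 + 1, hI⟩ : Fin n) = i := Fin.ext (by simp only; omega)
  have hlower : (lam j : ℤ) - 1 - ((lam i - r - 1 : ℕ) : ℤ) = lam j - lam i + r := by omega
  have hupper : (lam i : ℤ) - 1 - ((lam i - r - 1 : ℕ) : ℤ) = r := by omega
  rw [eHat, dif_pos hrange, coad_basis_fReg hcol horder hsurj bE hbE hrange, dif_pos hI, hIi,
    hlower, hupper]
  by_cases hj0 : (j : ℕ) = 0
  · rw [if_pos hj0, dif_neg (by omega), zero_sub]
  · rw [if_neg hj0, dif_pos (by omega)]
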